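/- arXiv:1804.01936 — 3 statements merged into one kernel-verified Lean document; each statement's English description precedes it below -/
import Mathlib

section
/- Let θ > 0 and λ_ℓ < λ_{ℓ+1} ≤ λ_n. With τ = (λ_{ℓ+1}+λ_n)/2 − 1/θ − 1, the ratio (max over λ ∈ [λ_{ℓ+1}, λ_n] of |1+θ(1+τ)−θλ|) / (min over λ ≤ λ_ℓ with λ ≥ λ_1 of |1+θ(1+τ)−θλ|) is at most (λ_n−λ_{ℓ+1})/(λ_n+λ_{ℓ+1}−2λ_ℓ), where the minimum in the denominator over λ ∈ [λ_1, λ_ℓ] is attained at λ = λ_ℓ and equals θ(λ_n+λ_{ℓ+1}−2λ_ℓ)/2. -/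
theorem richardson_rate_bound
    (θ lam1 lamℓ lamℓ1 lamn : ℝ) (hθ : 0 < θ)
    (h1ℓ : lam1 ≤ lamℓ) (hgap : lamℓ < lamℓ1) (hle : lamℓ1 ≤ lamn)
    (τ : ℝ) (hτ : τ = (lamℓ1 + lamn) / 2 - 1 / θ - 1) :
    (∀ lam ∈ Set.Icc lamℓ1 lamn,
        |1 + θ * (1 + τ) - θ * lam| ≤ θ * (lamn - lamℓ1) / 2) ∧
    (∀ lam ∈ Set.Icc lam1 lamℓ,
        |1 + θ * (1 + τ) - θ * lamℓ| ≤ |1 + θ * (1 + τ) - θ * lam|) ∧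
    |1 + θ * (1 + τ) - θ * lamℓ| = θ * (lamn + lamℓ1 - 2 * lamℓ) / 2 ∧
    (θ * (lamn - lamℓ1) / 2) / (θ * (lamn + lamℓ1 - 2 * lamℓ) / 2)
      ≤ (lamn - lamℓ1) / (lamn + lamℓ1 - 2 * lamℓ) := by
  have key : ∀ lam : ℝ, 1 + θ * (1 + τ) - θ * lam = θ * ((lamℓ1 + lamn) / 2 - lam) := by
    intro lam; subst hτ; field_simp; ring
  have hden : 0 < lamn + lamℓ1 - 2 * lamℓ := by linarith
  refine ⟨?_, ?_, ?_, ?_⟩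
  · intro lam ⟨h1, h2⟩
    rw [key, abs_mul, abs_of_pos hθ]
    rcases abs_cases ((lamℓ1 + lamn) / 2 - lam) with ⟨h, _⟩ | ⟨h, _⟩ <;> rw [h] <;> nlinarith
  · intro lam ⟨h1, h2⟩
    rw [key, key, abs_mul, abs_mul, abs_of_pos hθ]
    have : |(lamℓ1 + lamn) / 2 - lamℓ| = (lamℓ1 + lamn) / 2 - lamℓ :=
      abs_of_pos (by linarith)
    rw [this]
    have : |(lamℓ1 + lamn) / 2 - lam| = (lamℓ1 + lamn) / 2 - lam :=
      abs_of_pos (by linarith)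
    rw [this]
    nlinarith
  · rw [key, abs_mul, abs_of_pos hθ, abs_of_pos (show (0:ℝ) < (lamℓ1 + lamn) / 2 - lamℓ by linarith)]
    ring
  · rw [div_le_div_iff₀ (by positivity) hden]
    nlinarith [hθ.le, hle]
end

section
/- Let A be a symmetric n×n real matrix with orthonormal eigenbasis φ_1,…,φ_n and eigenvalues λ_1 ≤ … ≤ λ_n with λ_ℓ < λ_{ℓ+1}. Let θ > 0, τ = (λ_{ℓ+1}+λ_n)/2 − 1/θ − 1, G = (1+θ(1+τ))I − θA, and ρ = (λ_n−λ_{ℓ+1})/(λ_n+λ_{ℓ+1}−2λ_ℓ). If x = Σ_j α_j φ_j with α_ℓ ≠ 0, then for each j ≥ ℓ+1, |⟨Gx, φ_j⟩| / |⟨Gx, φ_ℓ⟩| ≤ ρ · |α_j|/|α_ℓ|; i.e., one Richardson step contracts the relative size of each undesired coefficient (relative to the ℓ-th desired coefficient) by at least the factor ρ < 1. -/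
/-!
Every eigenvector `φ k` of `A` is an eigenvector of `G` with eigenvalue
`1 + θ (1 + τ) - θ λₖ = θ (m - λₖ)`, where `m = (λ_{ℓ+1} + λ_n) / 2` is the midpoint of the
unwanted part of the spectrum. Hence the `k`-th coefficient of `Gx` is `θ (m - λₖ) αₖ`, and the
claim reduces to `|m - λⱼ| / (m - λ_ℓ) ≤ ρ`: for `λⱼ ∈ [λ_{ℓ+1}, λ_n]` the numerator is at most
half the length of that interval, while the denominator is positive because `λ_ℓ < λ_{ℓ+1}`.
-/

open Matrix Finset

lemma sum_smul_dotProduct_of_orthonormal {ι m R : Type*} [Fintype ι] [DecidableEq ι]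
    [Fintype m] [CommRing R] {φ : ι → m → R}
    (hφ : ∀ i j, φ i ⬝ᵥ φ j = if i = j then 1 else 0) (α : ι → R) (k : ι) :
    (∑ i, α i • φ i) ⬝ᵥ φ k = α k := by
  simp [sum_dotProduct, smul_dotProduct, hφ]

lemma mulVec_sum_smul_dotProduct_of_orthonormal {ι m R : Type*} [Fintype ι] [DecidableEq ι]
    [Fintype m] [CommRing R] {B : Matrix m m R} {φ : ι → m → R} {μ : ι → R}
    (hφ : ∀ i j, φ i ⬝ᵥ φ j = if i = j then 1 else 0) (hB : ∀ i, B *ᵥ φ i = μ i • φ i)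
    (α : ι → R) (k : ι) :
    B *ᵥ (∑ i, α i • φ i) ⬝ᵥ φ k = μ k * α k := by
  have hBx : B *ᵥ (∑ i, α i • φ i) = ∑ i, (μ i * α i) • φ i := by
    simp only [mulVec_sum, mulVec_smul, hB, smul_smul, mul_comm]
  rw [hBx, sum_smul_dotProduct_of_orthonormal hφ]

lemma smul_one_sub_smul_mulVec_of_mulVec_eq_smul {m R : Type*} [Fintype m] [DecidableEq m]
    [CommRing R] {A : Matrix m m R} {v : m → R} {μ : R} (hv : A *ᵥ v = μ • v) (c θ : R) :
    (c • (1 : Matrix m m R) - θ • A) *ᵥ v = (c - θ * μ) • v := by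
  rw [sub_mulVec, smul_mulVec, smul_mulVec, one_mulVec, hv, smul_smul, sub_smul]

lemma abs_midpoint_sub_div_le {l a b μ : ℝ} (hla : l < a) (hμ : μ ∈ Set.Icc a b) :
    |(a + b) / 2 - μ| / ((a + b) / 2 - l) ≤ (b - a) / (b + a - 2 * l) := by
  obtain ⟨haμ, hμb⟩ := hμ
  have hpos : 0 < (a + b) / 2 - l := by linarith
  have hhalf : |(a + b) / 2 - μ| ≤ (b - a) / 2 := abs_le.2 ⟨by linarith, by linarith⟩
  calc |(a + b) / 2 - μ| / ((a + b) / 2 - l) ≤ (b - a) / 2 / ((a + b) / 2 - l) := by gcongr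
    _ = (b - a) / (b + a - 2 * l) := by field_simp; ring

theorem richardson_step_contracts_relative_coefficients
    (n : ℕ) (A : Matrix (Fin (n + 1)) (Fin (n + 1)) ℝ)
    (φ : Fin (n + 1) → (Fin (n + 1) → ℝ)) (lam : Fin (n + 1) → ℝ)
    (hortho : ∀ i j, φ i ⬝ᵥ φ j = if i = j then (1 : ℝ) else 0)
    (heig : ∀ j, A.mulVec (φ j) = lam j • φ j)
    (hmono : Monotone lam)
    (ℓ : Fin (n + 1)) (hℓ : (ℓ : ℕ) + 1 ≤ n)
    (hgap : lam ℓ < lam ⟨(ℓ : ℕ) + 1, by omega⟩)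
    (θ τ : ℝ) (hθ : 0 < θ)
    (hτ : τ = (lam ⟨(ℓ : ℕ) + 1, by omega⟩ + lam (Fin.last n)) / 2 - 1 / θ - 1)
    (G : Matrix (Fin (n + 1)) (Fin (n + 1)) ℝ)
    (hG : G = (1 + θ * (1 + τ)) • (1 : Matrix (Fin (n + 1)) (Fin (n + 1)) ℝ) - θ • A)
    (ρ : ℝ)
    (hρ : ρ = (lam (Fin.last n) - lam ⟨(ℓ : ℕ) + 1, by omega⟩) /
        (lam (Fin.last n) + lam ⟨(ℓ : ℕ) + 1, by omega⟩ - 2 * lam ℓ))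
    (α : Fin (n + 1) → ℝ) (x : Fin (n + 1) → ℝ)
    (hx : x = ∑ j, α j • φ j)
    (j : Fin (n + 1)) (hj : (ℓ : ℕ) + 1 ≤ (j : ℕ)) :
    |G.mulVec x ⬝ᵥ φ j| / |G.mulVec x ⬝ᵥ φ ℓ| ≤ ρ * (|α j| / |α ℓ|) := by
  set a := lam ⟨(ℓ : ℕ) + 1, by omega⟩
  set b := lam (Fin.last n)
  have hshift : 1 + θ * (1 + τ) = θ * ((a + b) / 2) := by
    rw [hτ]; field_simp; ring
  have hcoef : ∀ k, G *ᵥ x ⬝ᵥ φ k = θ * ((a + b) / 2 - lam k) * α k := fun k => by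
    rw [hx, mulVec_sum_smul_dotProduct_of_orthonormal hortho
      (fun i => hG ▸ smul_one_sub_smul_mulVec_of_mulVec_eq_smul (heig i) _ θ), hshift, mul_sub]
  have hja : a ≤ lam j := hmono (Fin.le_def.2 hj)
  have hjb : lam j ≤ b := hmono (Fin.le_last j)
  have hℓpos : 0 < (a + b) / 2 - lam ℓ := by linarith
  rw [hcoef, hcoef, abs_mul, abs_mul, abs_mul, abs_mul, mul_assoc, mul_assoc,
    mul_div_mul_left _ _ (abs_ne_zero.2 hθ.ne'), ← div_mul_div_comm, abs_of_pos hℓpos, hρ]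
  exact mul_le_mul_of_nonneg_right
    (abs_midpoint_sub_div_le hgap ⟨hja, hjb⟩) (by positivity)
end

section
/- For fixed θ > 0 and λ_ℓ < λ_{ℓ+1} ≤ λ_n, the rate function R(τ) := max_{λ ∈ [λ_{ℓ+1},λ_n]} |1+θ(1+τ)−θλ| / |1+θ(1+τ)−θλ_ℓ| (defined where the denominator is nonzero) is minimized at τ* = (λ_{ℓ+1}+λ_n)/2 − 1/θ − 1 among all τ with 1+θ(1+τ)−θλ_ℓ ≥ θ(λ_n+λ_{ℓ+1}−2λ_ℓ)/2, and R(τ*) = (λ_n−λ_{ℓ+1})/(λ_n+λ_{ℓ+1}−2λ_ℓ). -/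
theorem optimal_shift_minimizes_rate
    (θ lamℓ lamℓ1 lamn : ℝ) (hθ : 0 < θ)
    (hgap : lamℓ < lamℓ1) (hle : lamℓ1 ≤ lamn)
    (R : ℝ → ℝ)
    (hR : ∀ τ, R τ =
      sSup ((fun lam => |1 + θ * (1 + τ) - θ * lam|) '' Set.Icc lamℓ1 lamn) /
        |1 + θ * (1 + τ) - θ * lamℓ|)
    (τstar : ℝ) (hτstar : τstar = (lamℓ1 + lamn) / 2 - 1 / θ - 1) :
    R τstar = (lamn - lamℓ1) / (lamn + lamℓ1 - 2 * lamℓ) ∧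
    ∀ τ, θ * (lamn + lamℓ1 - 2 * lamℓ) / 2 ≤ 1 + θ * (1 + τ) - θ * lamℓ →
      R τstar ≤ R τ := by
  have hθ0 : θ ≠ 0 := hθ.ne'
  have hgpos : 0 < lamn + lamℓ1 - 2 * lamℓ := by nlinarith
  have ha : 1 + θ * (1 + τstar) = θ * (lamℓ1 + lamn) / 2 := by
    rw [hτstar]; field_simp; ring
  have hRstar : R τstar = (lamn - lamℓ1) / (lamn + lamℓ1 - 2 * lamℓ) := by
    rw [hR]
    have hsup : sSup ((fun lam => |1 + θ * (1 + τstar) - θ * lam|) '' Set.Icc lamℓ1 lamn)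
        = θ * (lamn - lamℓ1) / 2 := by
      apply IsGreatest.csSup_eq
      constructor
      · exact ⟨lamn, ⟨hle, le_refl _⟩, by
          simp only [ha]; rw [abs_of_nonpos (by nlinarith)]; ring⟩
      · rintro x ⟨lam, ⟨h1, h2⟩, rfl⟩
        simp only [ha]
        rw [abs_le]
        constructor <;> nlinarith
    rw [hsup]
    have hden : |1 + θ * (1 + τstar) - θ * lamℓ| = θ * (lamn + lamℓ1 - 2 * lamℓ) / 2 := by
      rw [ha, abs_of_pos (by nlinarith)]; ring
    rw [hden, div_eq_div_iff (by positivity) hgpos.ne']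
    ring
  refine ⟨hRstar, fun τ hτ => ?_⟩
  rw [hRstar, hR]
  set a := 1 + θ * (1 + τ) with haτ
  have hc : 0 < a - θ * lamℓ := lt_of_lt_of_le (by positivity) hτ
  have hbdd : BddAbove ((fun lam => |a - θ * lam|) '' Set.Icc lamℓ1 lamn) := by
    refine ⟨|a - θ * lamℓ1| + |a - θ * lamn|, ?_⟩
    rintro x ⟨lam, ⟨h1, h2⟩, rfl⟩
    have e1 := le_abs_self (a - θ * lamℓ1)
    have e2 := neg_abs_le (a - θ * lamn)
    have e3 := abs_nonneg (a - θ * lamℓ1)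
    have e4 := abs_nonneg (a - θ * lamn)
    rw [abs_le]
    constructor <;> nlinarith
  have hmem : |a - θ * lamℓ1| ∈ (fun lam => |a - θ * lam|) '' Set.Icc lamℓ1 lamn :=
    ⟨lamℓ1, ⟨le_refl _, hle⟩, rfl⟩
  have hlow : a - θ * lamℓ1 ≤
      sSup ((fun lam => |a - θ * lam|) '' Set.Icc lamℓ1 lamn) :=
    le_trans (le_abs_self _) (le_csSup hbdd hmem)
  rw [abs_of_pos hc, div_le_div_iff₀ hgpos hc]
  have hkey : (lamn - lamℓ1) * (a - θ * lamℓ)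
      ≤ (a - θ * lamℓ1) * (lamn + lamℓ1 - 2 * lamℓ) := by
    nlinarith [mul_le_mul_of_nonneg_left hτ (by nlinarith : (0:ℝ) ≤ 2 * (lamℓ1 - lamℓ))]
  calc (lamn - lamℓ1) * (a - θ * lamℓ)
      ≤ (a - θ * lamℓ1) * (lamn + lamℓ1 - 2 * lamℓ) := hkey
    _ ≤ sSup ((fun lam => |a - θ * lam|) '' Set.Icc lamℓ1 lamn) * (lamn + lamℓ1 - 2 * lamℓ) :=
        mul_le_mul_of_nonneg_right hlow hgpos.le
end
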